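/- The function F(ℓ, Y₁, X₂, Y₂) = (1/2)(1 + μ + 2ℓ + ℓ²)Y₁ + (1/2)(1 + μ − ℓ²)Y₂ − v X₂ is a first integral of the linear subsystem for (Y₁, X₂, Y₂) of the transformed normal variational equations with ω = 0, along the particular solution (ℓ(t), v(t)) with ℓ' = v, v' = δ − ℓ. -/

import Mathlib

/-!
Differentiating `F` along the flow, the `Y₁`- and `Y₂`-terms cancel because the coefficients
`(1 + ℓ) ℓ'` and `-ℓ ℓ'` coming from `ℓ' = v` are matched by the `v / ℓ` couplings of the
subsystem, and the `X₂`-terms cancel against `v' X₂ = (δ - ℓ) X₂` because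
`(1 + μ + 2ℓ + ℓ²)(ℓ - 1) + (1 + μ - ℓ²)(ℓ + 1) = 2μℓ`.
-/

noncomputable def subsystemIntegral (μ ℓ v y₁ x₂ y₂ : ℝ) : ℝ :=
  1 / 2 * (1 + μ + 2 * ℓ + ℓ ^ 2) * y₁ + 1 / 2 * (1 + μ - ℓ ^ 2) * y₂ - v * x₂

theorem hasDerivAt_subsystemIntegral (μ : ℝ) {ℓ v y₁ x₂ y₂ : ℝ → ℝ} {ℓ' v' y₁' x₂' y₂' t : ℝ}
    (hℓ : HasDerivAt ℓ ℓ' t) (hv : HasDerivAt v v' t) (hy₁ : HasDerivAt y₁ y₁' t)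
    (hx₂ : HasDerivAt x₂ x₂' t) (hy₂ : HasDerivAt y₂ y₂' t) :
    HasDerivAt (fun s => subsystemIntegral μ (ℓ s) (v s) (y₁ s) (x₂ s) (y₂ s))
      ((1 + ℓ t) * ℓ' * y₁ t + 1 / 2 * (1 + μ + 2 * ℓ t + ℓ t ^ 2) * y₁'
        - ℓ t * ℓ' * y₂ t + 1 / 2 * (1 + μ - ℓ t ^ 2) * y₂'
        - (v' * x₂ t + v t * x₂')) t := by
  have hsq : HasDerivAt (fun s => ℓ s ^ 2) (2 * ℓ t * ℓ') t := by
    simpa using hℓ.fun_pow 2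
  have hc₁ : HasDerivAt (fun s => 1 / 2 * (1 + μ + 2 * ℓ s + ℓ s ^ 2))
      (1 / 2 * (2 * ℓ' + 2 * ℓ t * ℓ')) t :=
    (((hasDerivAt_const t (1 + μ)).fun_add (hℓ.const_mul 2)).fun_add hsq).const_mul _
      |>.congr_deriv (by ring)
  have hc₂ : HasDerivAt (fun s => 1 / 2 * (1 + μ - ℓ s ^ 2)) (1 / 2 * (-(2 * ℓ t * ℓ'))) t :=
    ((hasDerivAt_const t (1 + μ)).fun_sub hsq).const_mul _ |>.congr_deriv (by ring)
  exact ((hc₁.fun_mul hy₁).fun_add (hc₂.fun_mul hy₂)).fun_sub (hv.fun_mul hx₂)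
    |>.congr_deriv (by ring)

theorem subsystemIntegral_rate_eq_zero {μ ℓ : ℝ} (hμ : μ ≠ 0) (hℓ : ℓ ≠ 0) (δ v y₁ x₂ y₂ : ℝ) :
    (1 + ℓ) * v * y₁
      + 1 / 2 * (1 + μ + 2 * ℓ + ℓ ^ 2)
        * (-(v / ℓ) * y₁ + (δ - ℓ) * (ℓ - 1) / (μ * ℓ) * x₂ + v / ℓ * y₂)
      - ℓ * v * y₂
      + 1 / 2 * (1 + μ - ℓ ^ 2)
        * (v / ℓ * y₁ + (δ - ℓ) * (ℓ + 1) / (μ * ℓ) * x₂ - v / ℓ * y₂)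
      - ((δ - ℓ) * x₂ + v * y₂) = 0 := by
  field_simp
  ring

/-- `F = (1/2)(1+μ+2ℓ+ℓ²)Y₁ + (1/2)(1+μ-ℓ²)Y₂ - vX₂` is a first integral of the
subsystem for `(Y₁, X₂, Y₂)` of the transformed normal variational equations (ω = 0),
along the particular solution `ℓ' = v`, `v' = δ - ℓ`. -/
theorem first_integral_of_subsystem
    (μ δ : ℝ) (hμ : 0 < μ)
    (ℓ v : ℝ → ℝ)
    (hℓpos : ∀ t, 0 < ℓ t)
    (hℓ : ∀ t, HasDerivAt ℓ (v t) t)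
    (hv : ∀ t, HasDerivAt v (δ - ℓ t) t)
    (Y₁ X₂ Y₂ : ℝ → ℝ)
    (hY₁ : ∀ t, HasDerivAt Y₁ (-(v t / ℓ t) * Y₁ t
        + (δ - ℓ t) * (ℓ t - 1) / (μ * ℓ t) * X₂ t + (v t / ℓ t) * Y₂ t) t)
    (hX₂ : ∀ t, HasDerivAt X₂ (Y₂ t) t)
    (hY₂ : ∀ t, HasDerivAt Y₂ ((v t / ℓ t) * Y₁ t
        + (δ - ℓ t) * (ℓ t + 1) / (μ * ℓ t) * X₂ t - (v t / ℓ t) * Y₂ t) t) :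
    ∀ t, HasDerivAt (fun s => (1/2) * (1 + μ + 2 * ℓ s + (ℓ s)^2) * Y₁ s
      + (1/2) * (1 + μ - (ℓ s)^2) * Y₂ s - v s * X₂ s) 0 t := fun t =>
  (hasDerivAt_subsystemIntegral μ (hℓ t) (hv t) (hY₁ t) (hX₂ t) (hY₂ t)).congr_deriv
    (subsystemIntegral_rate_eq_zero hμ.ne' (hℓpos t).ne' δ (v t) (Y₁ t) (X₂ t) (Y₂ t))
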